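/- Let a, b, c be real numbers and let R(x,y,z) = x⁶ + y⁶ + z⁶ − (x⁴y² + x²y⁴ + x⁴z² + x²z⁴ + y⁴z² + y²z⁴) + 3x²y²z² be the Robinson form. Then the octic form (a²x² + b²y² + c²z²)·R(x,y,z) is a sum of squares of polynomials if and only if 2(a²b² + a²c² + b²c²) ≥ a⁴ + b⁴ + c⁴. -/

import Mathlib

open MvPolynomial

/-- A real polynomial is a sum of squares (sos) if it equals a finite sum of squares
of real polynomials. -/
def IsSos {n : ℕ} (p : MvPolynomial (Fin n) ℝ) : Prop :=
  ∃ (k : ℕ) (g : Fin k → MvPolynomial (Fin n) ℝ), p = ∑ i, g i ^ 2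

/-- A real polynomial is positive semidefinite (psd) if it takes nonnegative values
at every real point. -/
def Psd {n : ℕ} (p : MvPolynomial (Fin n) ℝ) : Prop :=
  ∀ x : Fin n → ℝ, 0 ≤ eval x p

/-- The Robinson form R(x,y,z) = x⁶+y⁶+z⁶ − (x⁴y²+x²y⁴+x⁴z²+x²z⁴+y⁴z²+y²z⁴) + 3x²y²z². -/
noncomputable def Robinson : MvPolynomial (Fin 3) ℝ :=
  X 0 ^ 6 + X 1 ^ 6 + X 2 ^ 6
    - (X 0 ^ 4 * X 1 ^ 2 + X 0 ^ 2 * X 1 ^ 4 + X 0 ^ 4 * X 2 ^ 2 + X 0 ^ 2 * X 2 ^ 4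
        + X 1 ^ 4 * X 2 ^ 2 + X 1 ^ 2 * X 2 ^ 4)
    + 3 * (X 0 ^ 2 * X 1 ^ 2 * X 2 ^ 2)

-- sum of squares of real mv-polynomials is zero iff each is zero
lemma sq_sum_zero {k : ℕ} (p : Fin k → MvPolynomial (Fin 3) ℝ)
    (h : ∑ i, p i ^ 2 = 0) : ∀ i, p i = 0 := by
  intro i
  apply MvPolynomial.funext
  intro x
  have hx : ∑ j, (eval x (p j)) ^ 2 = 0 := by
    have := congrArg (eval x) h
    simpa [map_sum] using this
  have hnn : ∀ j ∈ Finset.univ, (0:ℝ) ≤ (eval x (p j)) ^ 2 := fun j _ => sq_nonneg _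
  have := (Finset.sum_eq_zero_iff_of_nonneg hnn).mp hx i (Finset.mem_univ i)
  simpa [pow_eq_zero_iff] using this

noncomputable def Phi : MvPolynomial (Fin 3) ℝ →ₐ[ℝ] Polynomial (MvPolynomial (Fin 3) ℝ) :=
  aeval fun j => Polynomial.C (X j) * Polynomial.X

lemma Phi_monomial (d : Fin 3 →₀ ℕ) (r : ℝ) :
    Phi (monomial d r) = Polynomial.C (monomial d r) * Polynomial.X ^ (∑ j, d j) := by
  rw [Phi, aeval_monomial]
  rw [Finsupp.prod_fintype _ _ (fun j => pow_zero _)]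
  have h1 : ∀ j : Fin 3, (Polynomial.C (X j : MvPolynomial (Fin 3) ℝ) * Polynomial.X) ^ d j
      = Polynomial.C ((X j : MvPolynomial (Fin 3) ℝ) ^ d j) * Polynomial.X ^ d j := by
    intro j; rw [mul_pow, ← map_pow]
  simp_rw [h1]
  rw [Finset.prod_mul_distrib, ← map_prod, Finset.prod_pow_eq_pow_sum]
  have h2 : (monomial d r : MvPolynomial (Fin 3) ℝ) = C r * ∏ j, (X j : MvPolynomial (Fin 3) ℝ) ^ d j := by
    rw [monomial_eq, Finsupp.prod_fintype _ _ (fun j => pow_zero _)]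
  rw [h2]
  simp only [map_mul, algebraMap_eq]
  ring_nf
  simp [Polynomial.algebraMap_apply, algebraMap_eq]
  ring

lemma degree_eq_sum_fin3 (d : Fin 3 →₀ ℕ) : d.degree = ∑ j, d j := by
  rw [Finsupp.degree]
  exact Finset.sum_subset (Finset.subset_univ _) (by
    intro x _ hx
    simpa using Finsupp.notMem_support_iff.mp hx)

lemma Phi_coeff (p : MvPolynomial (Fin 3) ℝ) (n : ℕ) :
    (Phi p).coeff n = homogeneousComponent n p := by
  induction p using MvPolynomial.induction_on' with
  | monomial d r =>
    rw [Phi_monomial, Polynomial.coeff_C_mul, Polynomial.coeff_X_pow]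
    ext e
    rw [coeff_homogeneousComponent, degree_eq_sum_fin3]
    by_cases hde : d = e
    · subst hde
      by_cases h : n = ∑ j, d j <;>
        simp [h, coeff_monomial, Ne.symm, eq_comm (a := n)]
    · by_cases h : n = ∑ j, d j <;>
        simp [h, coeff_monomial, hde]
  | add p q hp hq =>
    rw [map_add, Polynomial.coeff_add, hp, hq, map_add]

lemma homog_decomp {k : ℕ} (p : MvPolynomial (Fin 3) ℝ) (g : Fin k → MvPolynomial (Fin 3) ℝ)
    (hPhi : Phi p = Polynomial.C p * Polynomial.X ^ 8) (hs : p = ∑ i, g i ^ 2) :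
    ∑ i, (homogeneousComponent 4 (g i)) ^ 2 = p := by
  have key : ∑ i, (Phi (g i)) ^ 2 = Polynomial.C p * Polynomial.X ^ 8 := by
    rw [← hPhi, hs]
    simp [map_sum, map_pow]
  have hdeg : ∀ i, (Phi (g i)).natDegree ≤ 4 := by
    by_contra hcon
    push_neg at hcon
    obtain ⟨i0, hi0⟩ := hcon
    obtain ⟨i1, -, hi1⟩ := Finset.exists_mem_eq_sup Finset.univ ⟨i0, Finset.mem_univ i0⟩
      (fun i => (Phi (g i)).natDegree)
    have hle : ∀ i, (Phi (g i)).natDegree ≤ (Phi (g i1)).natDegree := fun i =>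
      hi1 ▸ Finset.le_sup (f := fun i => (Phi (g i)).natDegree) (Finset.mem_univ i)
    have hD4 : 4 < (Phi (g i1)).natDegree := lt_of_lt_of_le hi0 (hle i0)
    have hterm : ∀ i, ((Phi (g i)) ^ 2).coeff (2 * (Phi (g i1)).natDegree)
        = ((Phi (g i)).coeff ((Phi (g i1)).natDegree)) ^ 2 := by
      intro i
      rcases lt_or_eq_of_le (hle i) with hlt | heq
      · rw [Polynomial.coeff_eq_zero_of_natDegree_lt hlt,
          Polynomial.coeff_eq_zero_of_natDegree_lt]
        · simp
        · rw [Polynomial.natDegree_pow]; omega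
      · rw [pow_two, two_mul, ← heq, Polynomial.coeff_mul_degree_add_degree,
          ← Polynomial.coeff_natDegree, heq]
        ring
    have hc := congrArg (fun q => Polynomial.coeff q (2 * (Phi (g i1)).natDegree)) key
    simp only [Polynomial.finset_sum_coeff] at hc
    rw [Finset.sum_congr rfl (fun i _ => hterm i)] at hc
    rw [Polynomial.coeff_C_mul, Polynomial.coeff_X_pow,
      if_neg (show ¬(2 * (Phi (g i1)).natDegree = 8) by omega), mul_zero] at hc
    have hz := sq_sum_zero _ hc i1
    have hzero : Phi (g i1) = 0 := Polynomial.leadingCoeff_eq_zero.mp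
      (by rw [← Polynomial.coeff_natDegree]; exact hz)
    rw [hzero] at hD4
    simp at hD4
  have h8 := congrArg (fun q => Polynomial.coeff q 8) key
  simp only [Polynomial.finset_sum_coeff] at h8
  have hterm : ∀ i, ((Phi (g i)) ^ 2).coeff 8 = ((Phi (g i)).coeff 4) ^ 2 := by
    intro i
    rw [pow_two, Polynomial.coeff_mul]
    rw [Finset.sum_eq_single ((4 : ℕ), (4 : ℕ))]
    · rw [← pow_two]
    · rintro ⟨x, y⟩ hxy hne
      rw [Finset.HasAntidiagonal.mem_antidiagonal] at hxy
      have hne4 : ¬(x = 4 ∧ y = 4) := by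
        intro h
        exact hne (by simp [h.1, h.2])
      have hxy4 : 4 < x ∨ 4 < y := by omega
      rcases hxy4 with h | h
      · rw [Polynomial.coeff_eq_zero_of_natDegree_lt (lt_of_le_of_lt (hdeg i) h), zero_mul]
      · rw [Polynomial.coeff_eq_zero_of_natDegree_lt (lt_of_le_of_lt (hdeg i) h), mul_zero]
    · intro hmem
      exact absurd (by simp) hmem
  rw [Finset.sum_congr rfl (fun i _ => hterm i)] at h8
  rw [Polynomial.coeff_C_mul, Polynomial.coeff_X_pow, if_pos rfl, mul_one] at h8
  rw [← h8]
  apply Finset.sum_congr rfl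
  intro i _
  rw [Phi_coeff]

lemma real_sq_sum_zero {k : ℕ} (f : Fin k → ℝ) (h : ∑ i, f i ^ 2 = 0) : ∀ i, f i = 0 := by
  intro i
  have hnn : ∀ j ∈ Finset.univ, (0:ℝ) ≤ f j ^ 2 := fun j _ => sq_nonneg _
  have := (Finset.sum_eq_zero_iff_of_nonneg hnn).mp h i (Finset.mem_univ i)
  simpa [pow_eq_zero_iff] using this

lemma prod_support_eq (v : Fin 3 → ℝ) (d : Fin 3 →₀ ℕ) :
    (∏ i ∈ d.support, v i ^ d i) = v 0 ^ d 0 * v 1 ^ d 1 * v 2 ^ d 2 := by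
  rw [Finset.prod_subset (Finset.subset_univ _) (by
    intro x _ hx
    simp [Finsupp.notMem_support_iff.mp hx])]
  rw [Fin.prod_univ_three]

lemma eval_quartic_id (h : MvPolynomial (Fin 3) ℝ) (hh : h.IsHomogeneous 4) :
    eval ![(1:ℝ),0,0] h + eval ![(0:ℝ),1,0] h + eval ![(0:ℝ),0,1] h =
      (eval ![(1:ℝ),1,0] h + eval ![(1:ℝ),-1,0] h + eval ![(1:ℝ),0,1] h + eval ![(1:ℝ),0,-1] h
        + eval ![(0:ℝ),1,1] h + eval ![(0:ℝ),1,-1] h) / 2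
      - (eval ![(1:ℝ),1,1] h + eval ![(1:ℝ),1,-1] h + eval ![(1:ℝ),-1,1] h
        + eval ![(1:ℝ),-1,-1] h) / 4 := by
  simp only [eval_eq, prod_support_eq, Matrix.cons_val_zero, Matrix.cons_val_one,
    Matrix.head_cons, Matrix.cons_val_two, Matrix.tail_cons]
  rw [← Finset.sum_add_distrib, ← Finset.sum_add_distrib, ← Finset.sum_add_distrib,
    ← Finset.sum_add_distrib, ← Finset.sum_add_distrib, ← Finset.sum_add_distrib,
    ← Finset.sum_add_distrib, ← Finset.sum_add_distrib, ← Finset.sum_add_distrib,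
    ← Finset.sum_add_distrib, Finset.sum_div, Finset.sum_div, ← Finset.sum_sub_distrib]
  apply Finset.sum_congr rfl
  intro d hd
  have hdeg : d 0 + d 1 + d 2 = 4 := by
    have h4 : (Finsupp.weight 1) d = 4 := hh (mem_support_iff.mp hd)
    have hdw : d.degree = (Finsupp.weight 1) d := by
      have := DFunLike.congr_fun Finsupp.degree_eq_weight_one d; exact this
    have := degree_eq_sum_fin3 d
    rw [hdw, h4] at this
    rw [Fin.sum_univ_three] at this
    omega
  have h0 : d 0 ≤ 4 := by omega
  have h1 : d 1 ≤ 4 := by omega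
  have h2 : d 2 ≤ 4 := by omega
  interval_cases h0 : d 0 <;> interval_cases h1 : d 1 <;> interval_cases h2 : d 2 <;>
    first
      | omega
      | (norm_num; done)
      | (norm_num; ring)

theorem aux_fwd (a b c : ℝ)
    (hsos : IsSos ((C (a ^ 2) * X 0 ^ 2 + C (b ^ 2) * X 1 ^ 2 + C (c ^ 2) * X 2 ^ 2) * Robinson)) :
    2 * (a ^ 2 * b ^ 2 + a ^ 2 * c ^ 2 + b ^ 2 * c ^ 2) ≥ a ^ 4 + b ^ 4 + c ^ 4 := by
  obtain ⟨k, g, hs⟩ := hsos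
  have hPhi : Phi ((C (a ^ 2) * X 0 ^ 2 + C (b ^ 2) * X 1 ^ 2 + C (c ^ 2) * X 2 ^ 2) * Robinson)
      = Polynomial.C ((C (a ^ 2) * X 0 ^ 2 + C (b ^ 2) * X 1 ^ 2 + C (c ^ 2) * X 2 ^ 2) * Robinson)
        * Polynomial.X ^ 8 := by
    simp only [Phi, Robinson, map_add, map_sub, map_mul, map_pow, map_ofNat, aeval_X,
      MvPolynomial.aeval_C, Polynomial.algebraMap_apply, MvPolynomial.algebraMap_eq]
    ring
  have hhom := homog_decomp _ g hPhi hs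
  set h4 : Fin k → MvPolynomial (Fin 3) ℝ := fun i => homogeneousComponent 4 (g i) with hh4
  have hev : ∀ v : Fin 3 → ℝ, ∑ i, (eval v (h4 i)) ^ 2
      = eval v ((C (a ^ 2) * X 0 ^ 2 + C (b ^ 2) * X 1 ^ 2 + C (c ^ 2) * X 2 ^ 2) * Robinson) := by
    intro v
    have := congrArg (eval v) hhom
    simpa [map_sum] using this
  have E : ∀ v : Fin 3 → ℝ,
      eval v ((C (a ^ 2) * X 0 ^ 2 + C (b ^ 2) * X 1 ^ 2 + C (c ^ 2) * X 2 ^ 2) * Robinson)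
      = (a ^ 2 * v 0 ^ 2 + b ^ 2 * v 1 ^ 2 + c ^ 2 * v 2 ^ 2)
        * (v 0 ^ 6 + v 1 ^ 6 + v 2 ^ 6
          - (v 0 ^ 4 * v 1 ^ 2 + v 0 ^ 2 * v 1 ^ 4 + v 0 ^ 4 * v 2 ^ 2 + v 0 ^ 2 * v 2 ^ 4
            + v 1 ^ 4 * v 2 ^ 2 + v 1 ^ 2 * v 2 ^ 4)
          + 3 * (v 0 ^ 2 * v 1 ^ 2 * v 2 ^ 2)) := by
    intro v
    simp [Robinson]
  have hz1 : ∀ i, eval ![(1:ℝ),1,0] (h4 i) = 0 := real_sq_sum_zero _ (by rw [hev, E]; norm_num [Matrix.cons_val_two, Matrix.tail_cons, Matrix.head_cons])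
  have hz2 : ∀ i, eval ![(1:ℝ),-1,0] (h4 i) = 0 := real_sq_sum_zero _ (by rw [hev, E]; norm_num [Matrix.cons_val_two, Matrix.tail_cons, Matrix.head_cons])
  have hz3 : ∀ i, eval ![(1:ℝ),0,1] (h4 i) = 0 := real_sq_sum_zero _ (by rw [hev, E]; norm_num [Matrix.cons_val_two, Matrix.tail_cons, Matrix.head_cons])
  have hz4 : ∀ i, eval ![(1:ℝ),0,-1] (h4 i) = 0 := real_sq_sum_zero _ (by rw [hev, E]; norm_num [Matrix.cons_val_two, Matrix.tail_cons, Matrix.head_cons])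
  have hz5 : ∀ i, eval ![(0:ℝ),1,1] (h4 i) = 0 := real_sq_sum_zero _ (by rw [hev, E]; norm_num [Matrix.cons_val_two, Matrix.tail_cons, Matrix.head_cons])
  have hz6 : ∀ i, eval ![(0:ℝ),1,-1] (h4 i) = 0 := real_sq_sum_zero _ (by rw [hev, E]; norm_num [Matrix.cons_val_two, Matrix.tail_cons, Matrix.head_cons])
  have hz7 : ∀ i, eval ![(1:ℝ),1,1] (h4 i) = 0 := real_sq_sum_zero _ (by rw [hev, E]; norm_num [Matrix.cons_val_two, Matrix.tail_cons, Matrix.head_cons])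
  have hz8 : ∀ i, eval ![(1:ℝ),1,-1] (h4 i) = 0 := real_sq_sum_zero _ (by rw [hev, E]; norm_num [Matrix.cons_val_two, Matrix.tail_cons, Matrix.head_cons])
  have hz9 : ∀ i, eval ![(1:ℝ),-1,1] (h4 i) = 0 := real_sq_sum_zero _ (by rw [hev, E]; norm_num [Matrix.cons_val_two, Matrix.tail_cons, Matrix.head_cons])
  have hz10 : ∀ i, eval ![(1:ℝ),-1,-1] (h4 i) = 0 := real_sq_sum_zero _ (by rw [hev, E]; norm_num [Matrix.cons_val_two, Matrix.tail_cons, Matrix.head_cons])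
  have hrel : ∀ i, eval ![(0:ℝ),0,1] (h4 i)
      = -(eval ![(1:ℝ),0,0] (h4 i) + eval ![(0:ℝ),1,0] (h4 i)) := by
    intro i
    have hq := eval_quartic_id (h4 i) (by rw [hh4]; exact homogeneousComponent_isHomogeneous 4 (g i))
    rw [hz1 i, hz2 i, hz3 i, hz4 i, hz5 i, hz6 i, hz7 i, hz8 i, hz9 i, hz10 i] at hq
    norm_num at hq
    linarith
  have hA : ∑ i, (eval ![(1:ℝ),0,0] (h4 i)) ^ 2 = a ^ 2 := by rw [hev, E]; norm_num [Matrix.cons_val_two, Matrix.tail_cons, Matrix.head_cons]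
  have hB : ∑ i, (eval ![(0:ℝ),1,0] (h4 i)) ^ 2 = b ^ 2 := by rw [hev, E]; norm_num [Matrix.cons_val_two, Matrix.tail_cons, Matrix.head_cons]
  have hC : ∑ i, (eval ![(0:ℝ),0,1] (h4 i)) ^ 2 = c ^ 2 := by rw [hev, E]; norm_num [Matrix.cons_val_two, Matrix.tail_cons, Matrix.head_cons]
  have hCexp : ∑ i, (eval ![(0:ℝ),0,1] (h4 i)) ^ 2
      = ∑ i, (eval ![(1:ℝ),0,0] (h4 i)) ^ 2 + ∑ i, (eval ![(0:ℝ),1,0] (h4 i)) ^ 2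
        + 2 * ∑ i, (eval ![(1:ℝ),0,0] (h4 i) * eval ![(0:ℝ),1,0] (h4 i)) := by
    rw [Finset.mul_sum, ← Finset.sum_add_distrib, ← Finset.sum_add_distrib]
    apply Finset.sum_congr rfl
    intro i _
    rw [hrel i]
    ring
  have hCS := Finset.sum_mul_sq_le_sq_mul_sq Finset.univ
    (fun i => eval ![(1:ℝ),0,0] (h4 i)) (fun i => eval ![(0:ℝ),1,0] (h4 i))
  rw [hA, hB] at hCS
  rw [hC, hA, hB] at hCexp
  nlinarith [hCS, hCexp]

theorem aux_back (a b c : ℝ)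
    (hineq : 2 * (a ^ 2 * b ^ 2 + a ^ 2 * c ^ 2 + b ^ 2 * c ^ 2) ≥ a ^ 4 + b ^ 4 + c ^ 4) :
    IsSos ((C (a ^ 2) * X 0 ^ 2 + C (b ^ 2) * X 1 ^ 2 + C (c ^ 2) * X 2 ^ 2) * Robinson) := by
  -- construct reals u v s with the three relations
  obtain ⟨u, v, s, hu, huv, hvs⟩ :
      ∃ u v s : ℝ, u ^ 2 = a ^ 2 ∧ 2 * (u * v) = c ^ 2 - a ^ 2 - b ^ 2 ∧ v ^ 2 + s ^ 2 = b ^ 2 := by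
    rcases eq_or_ne a 0 with ha | ha
    · subst ha
      have hbc : b ^ 2 = c ^ 2 := by
        have h1 : (b ^ 2 - c ^ 2) ^ 2 ≤ 0 := by nlinarith
        have h2 : b ^ 2 - c ^ 2 = 0 := by
          have := sq_nonneg (b ^ 2 - c ^ 2)
          nlinarith
        linarith
      exact ⟨0, b, 0, by norm_num, by rw [← hbc]; ring, by ring⟩
    · have ha2 : (0:ℝ) < a ^ 2 := by positivity
      set T : ℝ := 2 * (a ^ 2 * b ^ 2 + a ^ 2 * c ^ 2 + b ^ 2 * c ^ 2) - (a ^ 4 + b ^ 4 + c ^ 4)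
        with hT
      have hT0 : 0 ≤ T := by rw [hT]; linarith
      have hu0 : (0:ℝ) < Real.sqrt (a ^ 2) := Real.sqrt_pos.mpr ha2
      refine ⟨Real.sqrt (a ^ 2), (c ^ 2 - a ^ 2 - b ^ 2) / (2 * Real.sqrt (a ^ 2)),
        Real.sqrt T / (2 * Real.sqrt (a ^ 2)), Real.sq_sqrt (sq_nonneg a), ?_, ?_⟩
      · field_simp
      · have h1 : Real.sqrt (a ^ 2) ^ 2 = a ^ 2 := Real.sq_sqrt (sq_nonneg a)
        have h2 : Real.sqrt T ^ 2 = T := Real.sq_sqrt hT0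
        field_simp [hu0.ne']
        nlinarith [h1, h2, sq_nonneg (Real.sqrt (a^2))]
  refine ⟨5, ![C u * ((X 0 ^ 2 - X 2 ^ 2) * (X 0 ^ 2 + X 2 ^ 2 - X 1 ^ 2))
      + C v * ((X 1 ^ 2 - X 2 ^ 2) * (X 1 ^ 2 + X 2 ^ 2 - X 0 ^ 2)),
    C s * ((X 1 ^ 2 - X 2 ^ 2) * (X 1 ^ 2 + X 2 ^ 2 - X 0 ^ 2)),
    C c * (X 0 * X 1 * (X 0 ^ 2 - X 1 ^ 2)),
    C b * (X 0 * X 2 * (X 0 ^ 2 - X 2 ^ 2)),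
    C a * (X 1 * X 2 * (X 1 ^ 2 - X 2 ^ 2))], ?_⟩
  apply MvPolynomial.funext
  intro x
  simp only [Fin.sum_univ_five, Robinson, Matrix.cons_val_zero, Matrix.cons_val_one,
    Matrix.head_cons, Matrix.cons_val_two, Matrix.tail_cons, Matrix.cons_val_three,
    Matrix.cons_val_four, map_add, map_sub, map_mul, map_pow, eval_C, eval_X, map_ofNat]
  linear_combination (-(((x 0:ℝ) ^ 2 - x 2 ^ 2) * (x 0 ^ 2 + x 2 ^ 2 - x 1 ^ 2)) ^ 2) * hu
    + (-((((x 0:ℝ) ^ 2 - x 2 ^ 2) * (x 0 ^ 2 + x 2 ^ 2 - x 1 ^ 2))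
        * ((x 1 ^ 2 - x 2 ^ 2) * (x 1 ^ 2 + x 2 ^ 2 - x 0 ^ 2)))) * huv
    + (-(((x 1:ℝ) ^ 2 - x 2 ^ 2) * (x 1 ^ 2 + x 2 ^ 2 - x 0 ^ 2)) ^ 2) * hvs

/-- (a²x² + b²y² + c²z²)·R is sos iff 2(a²b² + a²c² + b²c²) ≥ a⁴ + b⁴ + c⁴. -/
theorem quadratic_mul_robinson_sos_iff (a b c : ℝ) :
    IsSos ((C (a ^ 2) * X 0 ^ 2 + C (b ^ 2) * X 1 ^ 2 + C (c ^ 2) * X 2 ^ 2) * Robinson) ↔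
      2 * (a ^ 2 * b ^ 2 + a ^ 2 * c ^ 2 + b ^ 2 * c ^ 2) ≥ a ^ 4 + b ^ 4 + c ^ 4 := by
  constructor
  · exact aux_fwd a b c
  · exact aux_back a b c
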